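/- Let G be a finite simple graph and L a list assignment on G with |L(v)| ≥ 4 for every vertex v. Suppose S is a set of five vertices of G such that the induced subgraph G[S] is isomorphic to W_4 (the complete graph K_5 minus two edges sharing no endpoint, i.e. a 4-cycle together with a hub adjacent to all four cycle vertices), four of the vertices of S have degree 4 in G and one vertex of S has degree 5 in G. If the induced subgraph of G on V(G) \ S has a proper L-coloring, then G has a proper L-coloring. -/

import Mathlib

open SimpleGraph

/-- `W₄`: the complete graph `K₅` minus two edges sharing no endpoint; equivalently the
4-cycle `0-1-2-3-0` together with the hub `4` adjacent to all four cycle vertices. -/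
def W4 : SimpleGraph (Fin 5) :=
  (⊤ : SimpleGraph (Fin 5)).deleteEdges {s((0 : Fin 5), (2 : Fin 5)), s((1 : Fin 5), (3 : Fin 5))}

/-!
Each vertex of `S` has `deg_G - deg_{W₄}` neighbours outside `S`, and each of them forbids at
most one colour of its list. So the residual lists on `W₄` have at least three colours, except
that the degree-5 vertex `u` keeps only two when it lies on the 4-cycle, in which case the hub
keeps all four. Colouring the hub first, by a colour outside the list of `u` when that list is
small, leaves at least two colours on every cycle vertex, and the 4-cycle is 2-choosable.
-/

open Finset

namespace SimpleGraph

variable {V W α : Type*}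

def IsListColoring (G : SimpleGraph V) (L : V → Finset α) (f : V → α) : Prop :=
  (∀ v, f v ∈ L v) ∧ ∀ x y, G.Adj x y → f x ≠ f y

theorem IsListColoring.comp_iso {G : SimpleGraph V} {H : SimpleGraph W} {L : V → Finset α}
    {f : W → α} {e : G ≃g H} (hf : H.IsListColoring (L ∘ e.symm) f) :
    G.IsListColoring L (f ∘ e) :=
  ⟨fun v => by simpa using hf.1 (e v), fun _ _ hxy => hf.2 _ _ (e.map_adj_iff.mpr hxy)⟩

section Outside

variable [Fintype V] [DecidableEq α] (G : SimpleGraph V) [DecidableRel G.Adj]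
  (S : Set V) [DecidablePred (· ∈ S)]

def colorsOutside (g : ↥Sᶜ → α) (v : V) : Finset α :=
  ((G.neighborFinset v).subtype (· ∈ Sᶜ)).image g

theorem card_add_degree_induce_le_card_sdiff_colorsOutside (L : V → Finset α) (g : ↥Sᶜ → α)
    (v : S) :
    #(L v) + (G.induce S).degree v ≤ #(L v \ G.colorsOutside S g v) + G.degree v := by
  have hsplit := card_filter_add_card_filter_not (s := G.neighborFinset v) (· ∈ S)
  have hinside : (G.induce S).degree v = #((G.neighborFinset v).filter (· ∈ S)) := by
    rw [← card_neighborFinset_eq_degree, ← card_map (.subtype (· ∈ S))]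
    congr 1
    ext w
    simp
  have houtside : #(G.colorsOutside S g v) ≤ #((G.neighborFinset v).filter (· ∉ S)) :=
    card_image_le.trans (card_subtype _ _).le
  have := card_le_card_sdiff_add_card (s := L v) (t := G.colorsOutside S g v)
  rw [card_neighborFinset_eq_degree] at hsplit
  omega

variable {G S}

theorem IsListColoring.extend {L : V → Finset α} {g : ↥Sᶜ → α} {c : S → α}
    (hc : (G.induce S).IsListColoring (fun v => L v \ G.colorsOutside S g v) c)
    (hg : (G.induce Sᶜ).IsListColoring (fun v => L v) g) :
    G.IsListColoring L (fun v => if h : v ∈ S then c ⟨v, h⟩ else g ⟨v, h⟩) := by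
  have hcross : ∀ (x : S) (y : ↥Sᶜ), G.Adj x y → c x ≠ g y := fun x y hxy hcg =>
    (mem_sdiff.mp (hc.1 x)).2 <| hcg ▸ mem_image_of_mem g (by simpa using hxy)
  refine ⟨fun v => ?_, fun x y hxy => ?_⟩
  · dsimp only
    split_ifs with h
    · exact (mem_sdiff.mp (hc.1 ⟨v, h⟩)).1
    · exact hg.1 ⟨v, h⟩
  · dsimp only
    split_ifs with hx hy hy
    · exact hc.2 ⟨x, hx⟩ ⟨y, hy⟩ hxy
    · exact hcross ⟨x, hx⟩ ⟨y, hy⟩ hxy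
    · exact (hcross ⟨y, hy⟩ ⟨x, hx⟩ hxy.symm).symm
    · exact hg.2 ⟨x, hx⟩ ⟨y, hy⟩ hxy

end Outside

end SimpleGraph

section ListColoring

variable {α : Type*} [DecidableEq α]

/-- The 4-cycle `a b c d` is 2-choosable: opposite vertices sharing a colour make it easy;
otherwise some colour of `b` is missing from the list of `a` or of `c`, and the cycle is coloured
greedily from `b` in the other direction. -/
theorem exists_four_cycle_choice {A B C D : Finset α} (hA : 2 ≤ #A) (hB : 2 ≤ #B) (hC : 2 ≤ #C)
    (hD : 2 ≤ #D) : ∃ a ∈ A, ∃ b ∈ B, ∃ c ∈ C, ∃ d ∈ D, a ≠ b ∧ b ≠ c ∧ c ≠ d ∧ d ≠ a := by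
  by_cases hAC : ∃ x ∈ A, x ∈ C
  · obtain ⟨x, hxA, hxC⟩ := hAC
    obtain ⟨b, hb, hbx⟩ := exists_mem_ne hB x
    obtain ⟨d, hd, hdx⟩ := exists_mem_ne hD x
    exact ⟨x, hxA, b, hb, x, hxC, d, hd, hbx.symm, hbx, hdx.symm, hdx⟩
  push Not at hAC
  obtain ⟨b, hb⟩ := card_pos.mp (by omega : 0 < #B)
  by_cases hbA : b ∈ A
  · obtain ⟨a, ha, hab⟩ := exists_mem_ne hA b
    obtain ⟨d, hd, hda⟩ := exists_mem_ne hD a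
    obtain ⟨c, hc, hcd⟩ := exists_mem_ne hC d
    exact ⟨a, ha, b, hb, c, hc, d, hd, hab, (ne_of_mem_of_not_mem hc (hAC b hbA)).symm, hcd, hda⟩
  · obtain ⟨c, hc, hcb⟩ := exists_mem_ne hC b
    obtain ⟨d, hd, hdc⟩ := exists_mem_ne hD c
    obtain ⟨a, ha, had⟩ := exists_mem_ne hA d
    exact ⟨a, ha, b, hb, c, hc, d, hd, ne_of_mem_of_not_mem ha hbA, hcb.symm, hdc.symm, had.symm⟩

theorem W4_adj_iff {i j : Fin 5} : W4.Adj i j ↔ i ≠ j ∧ s(i, j) ≠ s(0, 2) ∧ s(i, j) ≠ s(1, 3) := by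
  simp [W4, and_assoc]

instance : DecidableRel W4.Adj := fun _ _ => decidable_of_iff' _ W4_adj_iff

theorem exists_W4_isListColoring (M : Fin 5 → Finset α) (k : Fin 5) (hk : 2 ≤ #(M k))
    (hother : ∀ i ≠ k, 3 ≤ #(M i)) (hhub : 3 ≤ #(M 4)) : ∃ f, W4.IsListColoring M f := by
  obtain ⟨x, hx, hxk⟩ : ∃ x ∈ M 4, 2 ≤ #((M k).erase x) := by
    by_cases h : M 4 ⊆ M k
    · obtain ⟨x, hx⟩ := card_pos.mp (by omega : 0 < #(M 4))
      have := card_le_card h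
      have := pred_card_le_card_erase (s := M k) (a := x)
      exact ⟨x, hx, by omega⟩
    · obtain ⟨x, hx, hxk⟩ := not_subset.mp h
      exact ⟨x, hx, by rwa [erase_eq_of_notMem hxk]⟩
  have hcycle (i : Fin 5) : 2 ≤ #((M i).erase x) := by
    rcases eq_or_ne i k with rfl | hik
    · exact hxk
    · have := hother i hik
      have := pred_card_le_card_erase (s := M i) (a := x)
      omega
  obtain ⟨a, ha, b, hb, c, hc, d, hd, hab, hbc, hcd, hda⟩ :=
    exists_four_cycle_choice (hcycle 0) (hcycle 1) (hcycle 2) (hcycle 3)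
  rw [mem_erase] at ha hb hc hd
  refine ⟨![a, b, c, d, x], fun i => ?_, fun i j hij => ?_⟩
  · fin_cases i <;> simp [ha.2, hb.2, hc.2, hd.2, hx]
  · fin_cases i <;> fin_cases j <;> simp_all [W4_adj_iff, Ne.symm]

theorem exists_W4_isListColoring_of_card_add_degree (M : Fin 5 → Finset α) (d : Fin 5 → ℕ)
    (k : Fin 5) (hM : ∀ i, 4 + W4.degree i ≤ #(M i) + d i) (hk : d k = 5)
    (hd : ∀ i ≠ k, d i = 4) : ∃ f, W4.IsListColoring M f := by
  have hW4 : (∀ i, 3 ≤ W4.degree i) ∧ W4.degree 4 = 4 := by decide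
  refine exists_W4_isListColoring M k ?_ (fun i hi => ?_) ?_
  · have := hM k
    have := hW4.1 k
    omega
  · have := hM i
    have := hW4.1 i
    have := hd i hi
    omega
  · have := hM 4
    rcases eq_or_ne 4 k with h | h
    · rw [← h] at hk
      omega
    · have := hd 4 h
      omega

end ListColoring

/-- Let `G` be a finite simple graph and `L` a list assignment with
`|L v| ≥ 4` for all `v`.  If `S` is a set of five vertices with `G[S] ≅ W₄`, four of the
vertices of `S` having degree `4` in `G` and one having degree `5` in `G`, and the induced
subgraph of `G` on the complement of `S` has a proper `L`-coloring, then `G` has a proper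
`L`-coloring. -/
theorem extend_coloring_W4 {V : Type*} [Fintype V]
    (G : SimpleGraph V) [DecidableRel G.Adj]
    (L : V → Finset ℕ) (hL : ∀ v, 4 ≤ (L v).card)
    (S : Set V) (hiso : Nonempty (G.induce S ≃g W4))
    (u : V) (hu : u ∈ S) (hu5 : G.degree u = 5)
    (hdeg4 : ∀ v ∈ S, v ≠ u → G.degree v = 4)
    (hcol : ∃ f : ↥(Sᶜ) → ℕ, (∀ v : ↥(Sᶜ), f v ∈ L ↑v) ∧
      ∀ x y, (G.induce Sᶜ).Adj x y → f x ≠ f y) :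
    ∃ f : V → ℕ, (∀ v, f v ∈ L v) ∧ ∀ x y, G.Adj x y → f x ≠ f y := by
  classical
  obtain ⟨g, hg⟩ := hcol
  obtain ⟨e⟩ := hiso
  set R : S → Finset ℕ := fun v => L v \ G.colorsOutside S g v
  have hR (i : Fin 5) : 4 + W4.degree i ≤ #(R (e.symm i)) + G.degree (e.symm i) := by
    have := G.card_add_degree_induce_le_card_sdiff_colorsOutside S L g (e.symm i)
    rw [e.symm.degree_eq] at this
    have := hL (e.symm i)
    simp only [R]
    omega
  obtain ⟨c, hc⟩ := exists_W4_isListColoring_of_card_add_degree (R ∘ e.symm)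
    (fun i => G.degree (e.symm i)) (e ⟨u, hu⟩) hR (by rw [e.symm_apply_apply]; exact hu5)
    fun i hi => hdeg4 _ (e.symm i).2 fun h => hi (e.symm_apply_eq.mp (Subtype.ext h))
  exact ⟨_, hc.comp_iso.extend hg⟩
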